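/- Let Q be a seminormal quasi-crystal such that the set {wt(x) : x ∈ Q} of weights of elements of Q is linearly independent in V. Then the plactic congruence is contained in the hypoplactic congruence, ≈ ⊆ ∼̈ (i.e., for all words u, v ∈ Q*, u ≈ v implies u ∼̈ v). Consequently, the hypoplactic monoid hypo(Q) = Q*/∼̈ is a monoid quotient of the plactic monoid plac(Q) = Q*/≈. -/

import Mathlib

/-! ## Root system setting -/

/-- The data of a root system `Φ` in a Euclidean space `V`, together with a choice of
simple roots `(α_i)_{i ∈ ι}` and a weight lattice `Λ`, with the integer-valued coroot
pairing `pair λ i = ⟨λ, α_i^∨⟩ = 2⟪λ, α_i⟫/⟪α_i, α_i⟫` on the weight lattice. -/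
structure QCSetting (V : Type*) [NormedAddCommGroup V] [InnerProductSpace ℝ V]
    (ι : Type*) where
  Φ : Set V
  finite : Φ.Finite
  nonempty : Φ.Nonempty
  zero_not_mem : (0 : V) ∉ Φ
  reflect_mem : ∀ a ∈ Φ, ∀ b ∈ Φ, b - (2 * (inner ℝ b a : ℝ) / (inner ℝ a a : ℝ)) • a ∈ Φ
  smul_root : ∀ a ∈ Φ, ∀ k : ℝ, k • a ∈ Φ → k = 1 ∨ k = -1
  simple : ι → V
  simple_mem : ∀ i, simple i ∈ Φ
  simple_indep : LinearIndependent ℝ simple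
  Λ : AddSubgroup V
  lattice_spans : Submodule.span ℝ (Λ : Set V) = ⊤
  root_mem_lattice : ∀ a ∈ Φ, a ∈ Λ
  pair : Λ → ι → ℤ
  pair_spec : ∀ (v : Λ) (i : ι),
    (pair v i : ℝ) = 2 * (inner ℝ (v : V) (simple i) : ℝ) / (inner ℝ (simple i) (simple i) : ℝ)

variable {V : Type*} [NormedAddCommGroup V] [InnerProductSpace ℝ V] {ι : Type*}

/-! ## Quasi-crystals -/

/-- The structure maps of a quasi-crystal of type `S` on an underlying set `Q`:
a weight map `wt` with values in the weight lattice, partial quasi-Kashiwara operators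
`e i, f i : Q → Q ⊔ {⊥}` (realized as `Option`-valued maps, `none` playing the role
of `⊥`), and maps `ε i, φ i : Q → ℤ ∪ {+∞}` (realized as `WithTop ℤ`). -/
structure QC (S : QCSetting V ι) (Q : Type*) where
  wt : Q → S.Λ
  e : ι → Q → Option Q
  f : ι → Q → Option Q
  ε : ι → Q → WithTop ℤ
  φ : ι → Q → WithTop ℤ

/-- `k`-fold iteration of a partial map `g : Q → Option Q` starting at `x`. -/
def optIter {Q : Type*} (g : Q → Option Q) (k : ℕ) (x : Q) : Option Q :=
  (fun o => o.bind g)^[k] (some x)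

/-- The axioms of a seminormal quasi-crystal. -/
structure QC.IsSeminormal {S : QCSetting V ι} {Q : Type*} (𝒬 : QC S Q) : Prop where
  phi_eq : ∀ i x, 𝒬.φ i x = 𝒬.ε i x + ((S.pair (𝒬.wt x) i : ℤ) : WithTop ℤ)
  wt_e : ∀ i x y, 𝒬.e i x = some y → (𝒬.wt y : V) = (𝒬.wt x : V) + S.simple i
  wt_f : ∀ i x y, 𝒬.f i x = some y → (𝒬.wt y : V) = (𝒬.wt x : V) - S.simple i
  e_iff_f : ∀ i x y, 𝒬.e i x = some y ↔ 𝒬.f i y = some x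
  e_of_top : ∀ i x, 𝒬.ε i x = ⊤ → 𝒬.e i x = none
  f_of_top : ∀ i x, 𝒬.ε i x = ⊤ → 𝒬.f i x = none
  eps_spec : ∀ i x, 𝒬.ε i x ≠ ⊤ → ∃ n : ℕ, 𝒬.ε i x = ((n : ℤ) : WithTop ℤ) ∧
    IsGreatest {k : ℕ | (optIter (𝒬.e i) k x).isSome} n
  phi_spec : ∀ i x, 𝒬.ε i x ≠ ⊤ → ∃ n : ℕ, 𝒬.φ i x = ((n : ℤ) : WithTop ℤ) ∧
    IsGreatest {k : ℕ | (optIter (𝒬.f i) k x).isSome} n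

/-- A seminormal crystal is a seminormal quasi-crystal in which `ε i x ≠ +∞` always. -/
def QC.IsSeminormalCrystal {S : QCSetting V ι} {Q : Type*} (𝒬 : QC S Q) : Prop :=
  𝒬.IsSeminormal ∧ ∀ i x, 𝒬.ε i x ≠ ⊤

/-! ## Tensor product -/

/-- The tensor product of two quasi-crystals of the same type. -/
noncomputable def QC.tensor {S : QCSetting V ι} {Q Q' : Type*} (𝒬 : QC S Q) (𝒬' : QC S Q') :
    QC S (Q × Q') where
  wt p := 𝒬.wt p.1 + 𝒬'.wt p.2
  ε i p := max (𝒬.ε i p.1) (𝒬'.ε i p.2 + ((-(S.pair (𝒬.wt p.1) i) : ℤ) : WithTop ℤ))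
  φ i p := max (𝒬.φ i p.1 + ((S.pair (𝒬'.wt p.2) i : ℤ) : WithTop ℤ)) (𝒬'.φ i p.2)
  e i p := if 𝒬'.ε i p.2 ≤ 𝒬.φ i p.1
    then (𝒬.e i p.1).map (fun y => (y, p.2))
    else (𝒬'.e i p.2).map (fun y => (p.1, y))
  f i p := if 𝒬'.ε i p.2 < 𝒬.φ i p.1
    then (𝒬.f i p.1).map (fun y => (y, p.2))
    else (𝒬'.f i p.2).map (fun y => (p.1, y))

/-! ## Quasi-tensor product -/

/-- The (inverse-free) quasi-tensor product of two quasi-crystals of the same type. -/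
noncomputable def QC.qtensor {S : QCSetting V ι} {Q Q' : Type*} (𝒬 : QC S Q) (𝒬' : QC S Q') :
    QC S (Q × Q') where
  wt p := 𝒬.wt p.1 + 𝒬'.wt p.2
  ε i p := if 0 < 𝒬.φ i p.1 ∧ 0 < 𝒬'.ε i p.2 then ⊤
    else max (𝒬.ε i p.1) (𝒬'.ε i p.2 + ((-(S.pair (𝒬.wt p.1) i) : ℤ) : WithTop ℤ))
  φ i p := if 0 < 𝒬.φ i p.1 ∧ 0 < 𝒬'.ε i p.2 then ⊤
    else max (𝒬.φ i p.1 + ((S.pair (𝒬'.wt p.2) i : ℤ) : WithTop ℤ)) (𝒬'.φ i p.2)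
  e i p := if 0 < 𝒬.φ i p.1 ∧ 0 < 𝒬'.ε i p.2 then none
    else if 𝒬'.ε i p.2 ≤ 𝒬.φ i p.1 then (𝒬.e i p.1).map (fun y => (y, p.2))
    else (𝒬'.e i p.2).map (fun y => (p.1, y))
  f i p := if 0 < 𝒬.φ i p.1 ∧ 0 < 𝒬'.ε i p.2 then none
    else if 𝒬'.ε i p.2 < 𝒬.φ i p.1 then (𝒬.f i p.1).map (fun y => (y, p.2))
    else (𝒬'.f i p.2).map (fun y => (p.1, y))

/-! ## Homomorphisms -/

/-- A quasi-crystal homomorphism `ψ : 𝒬 → 𝒬'`, i.e. a map `Q ⊔ {⊥} → Q' ⊔ {⊥}`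
(realized on `Option`s, `none` playing the role of `⊥`) compatible with the structure
maps in the appropriate sense. -/
structure QCHom {S : QCSetting V ι} {Q Q' : Type*} (𝒬 : QC S Q) (𝒬' : QC S Q') where
  toFun : Option Q → Option Q'
  map_none : toFun none = none
  wt_eq : ∀ x y, toFun (some x) = some y → 𝒬'.wt y = 𝒬.wt x
  eps_eq : ∀ i x y, toFun (some x) = some y → 𝒬'.ε i y = 𝒬.ε i x
  phi_eq : ∀ i x y, toFun (some x) = some y → 𝒬'.φ i y = 𝒬.φ i x
  comm_e : ∀ i x x' y y', 𝒬.e i x = some x' → toFun (some x) = some y →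
    toFun (some x') = some y' → 𝒬'.e i y = some y'
  comm_f : ∀ i x x' y y', 𝒬.f i x = some x' → toFun (some x) = some y →
    toFun (some x') = some y' → 𝒬'.f i y = some y'

/-! ## The free `⊗`-quasi-crystal monoid -/

/-- Weight of a word: the sum of the weights of its letters. -/
def freeWt {S : QCSetting V ι} {Q : Type*} (𝒬 : QC S Q) : List Q → S.Λ
  | [] => 0
  | x :: w => 𝒬.wt x + freeWt 𝒬 w

/-- The map `ε̈_i` of the free `⊗`-quasi-crystal monoid. -/
def freeEps {S : QCSetting V ι} {Q : Type*} (𝒬 : QC S Q) (i : ι) : List Q → WithTop ℤ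
  | [] => 0
  | x :: w => max (𝒬.ε i x) (freeEps 𝒬 i w + ((-(S.pair (𝒬.wt x) i) : ℤ) : WithTop ℤ))

/-- The map `φ̈_i` of the free `⊗`-quasi-crystal monoid. -/
def freePhi {S : QCSetting V ι} {Q : Type*} (𝒬 : QC S Q) (i : ι) : List Q → WithTop ℤ
  | [] => 0
  | x :: w => max (𝒬.φ i x + ((S.pair (freeWt 𝒬 w) i : ℤ) : WithTop ℤ)) (freePhi 𝒬 i w)

/-- The operator `ë_i` of the free `⊗`-quasi-crystal monoid. -/
noncomputable def freeE {S : QCSetting V ι} {Q : Type*} (𝒬 : QC S Q) (i : ι) : List Q → Option (List Q)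
  | [] => none
  | x :: w => if freeEps 𝒬 i w ≤ 𝒬.φ i x
      then (𝒬.e i x).map (· :: w)
      else (freeE 𝒬 i w).map (x :: ·)

/-- The operator `f̈_i` of the free `⊗`-quasi-crystal monoid. -/
noncomputable def freeF {S : QCSetting V ι} {Q : Type*} (𝒬 : QC S Q) (i : ι) : List Q → Option (List Q)
  | [] => none
  | x :: w => if freeEps 𝒬 i w < 𝒬.φ i x
      then (𝒬.f i x).map (· :: w)
      else (freeF 𝒬 i w).map (x :: ·)

/-- The quasi-crystal structure of the free `⊗`-quasi-crystal monoid `F^⊗(𝒬)`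
on the free monoid `Q*`. -/
noncomputable def freeTensorQC {S : QCSetting V ι} {Q : Type*} (𝒬 : QC S Q) : QC S (FreeMonoid Q) where
  wt w := freeWt 𝒬 (FreeMonoid.toList w)
  ε i w := freeEps 𝒬 i (FreeMonoid.toList w)
  φ i w := freePhi 𝒬 i (FreeMonoid.toList w)
  e i w := (freeE 𝒬 i (FreeMonoid.toList w)).map (fun l => FreeMonoid.ofList l)
  f i w := (freeF 𝒬 i (FreeMonoid.toList w)).map (fun l => FreeMonoid.ofList l)

/-! ## The free `⊗̈`-quasi-crystal monoid -/

/-- The map `ε̈_i` of the free `⊗̈`-quasi-crystal monoid. -/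
noncomputable def qfreeEps {S : QCSetting V ι} {Q : Type*} (𝒬 : QC S Q) (i : ι) : List Q → WithTop ℤ
  | [] => 0
  | x :: w => if 0 < 𝒬.φ i x ∧ 0 < qfreeEps 𝒬 i w then ⊤
      else max (𝒬.ε i x) (qfreeEps 𝒬 i w + ((-(S.pair (𝒬.wt x) i) : ℤ) : WithTop ℤ))

/-- The map `φ̈_i` of the free `⊗̈`-quasi-crystal monoid. -/
noncomputable def qfreePhi {S : QCSetting V ι} {Q : Type*} (𝒬 : QC S Q) (i : ι) : List Q → WithTop ℤ
  | [] => 0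
  | x :: w => if 0 < 𝒬.φ i x ∧ 0 < qfreeEps 𝒬 i w then ⊤
      else max (𝒬.φ i x + ((S.pair (freeWt 𝒬 w) i : ℤ) : WithTop ℤ)) (qfreePhi 𝒬 i w)

/-- The operator `ë_i` of the free `⊗̈`-quasi-crystal monoid. -/
noncomputable def qfreeE {S : QCSetting V ι} {Q : Type*} (𝒬 : QC S Q) (i : ι) : List Q → Option (List Q)
  | [] => none
  | x :: w => if 0 < 𝒬.φ i x ∧ 0 < qfreeEps 𝒬 i w then none
      else if qfreeEps 𝒬 i w ≤ 𝒬.φ i x then (𝒬.e i x).map (· :: w)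
      else (qfreeE 𝒬 i w).map (x :: ·)

/-- The operator `f̈_i` of the free `⊗̈`-quasi-crystal monoid. -/
noncomputable def qfreeF {S : QCSetting V ι} {Q : Type*} (𝒬 : QC S Q) (i : ι) : List Q → Option (List Q)
  | [] => none
  | x :: w => if 0 < 𝒬.φ i x ∧ 0 < qfreeEps 𝒬 i w then none
      else if qfreeEps 𝒬 i w < 𝒬.φ i x then (𝒬.f i x).map (· :: w)
      else (qfreeF 𝒬 i w).map (x :: ·)

/-- The quasi-crystal structure of the free `⊗̈`-quasi-crystal monoid `F^⊗̈(𝒬)`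
on the free monoid `Q*`. -/
noncomputable def freeQTensorQC {S : QCSetting V ι} {Q : Type*} (𝒬 : QC S Q) : QC S (FreeMonoid Q) where
  wt w := freeWt 𝒬 (FreeMonoid.toList w)
  ε i w := qfreeEps 𝒬 i (FreeMonoid.toList w)
  φ i w := qfreePhi 𝒬 i (FreeMonoid.toList w)
  e i w := (qfreeE 𝒬 i (FreeMonoid.toList w)).map (fun l => FreeMonoid.ofList l)
  f i w := (qfreeF 𝒬 i (FreeMonoid.toList w)).map (fun l => FreeMonoid.ofList l)

/-! ## Connected components, plactic and hypoplactic congruences -/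

/-- Two elements are connected in the quasi-crystal graph if they are related by the
reflexive-symmetric-transitive closure of the edge relation given by the
quasi-Kashiwara operators. -/
def QC.conn {S : QCSetting V ι} {Q : Type*} (𝒬 : QC S Q) : Q → Q → Prop :=
  Relation.EqvGen (fun x y => ∃ i, 𝒬.f i x = some y ∨ 𝒬.f i y = some x ∨
    𝒬.e i x = some y ∨ 𝒬.e i y = some x)

/-- The connected component `𝒬(x)` of a quasi-crystal `𝒬` containing `x`, as a
quasi-crystal on the subtype of elements connected with `x`. -/
def QC.compQC {S : QCSetting V ι} {Q : Type*} (𝒬 : QC S Q) (x : Q) :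
    QC S {y : Q // 𝒬.conn x y} where
  wt y := 𝒬.wt y.1
  ε i y := 𝒬.ε i y.1
  φ i y := 𝒬.φ i y.1
  e i y := (𝒬.e i y.1).pmap (fun z hz => (⟨z, hz⟩ : {y : Q // 𝒬.conn x y}))
    (fun z hz => Relation.EqvGen.trans _ _ _ y.2
      (Relation.EqvGen.rel _ _ ⟨i, Or.inr (Or.inr (Or.inl hz))⟩))
  f i y := (𝒬.f i y.1).pmap (fun z hz => (⟨z, hz⟩ : {y : Q // 𝒬.conn x y}))
    (fun z hz => Relation.EqvGen.trans _ _ _ y.2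
      (Relation.EqvGen.rel _ _ ⟨i, Or.inl hz⟩))

/-- The plactic congruence: `u ≈ v` iff there is a quasi-crystal isomorphism between the
connected components of `u` and `v` in `F^⊗(𝒬)` mapping `u` to `v`. -/
def placticRel {S : QCSetting V ι} {Q : Type*} (𝒬 : QC S Q)
    (u v : FreeMonoid Q) : Prop :=
  ∃ ψ : QCHom ((freeTensorQC 𝒬).compQC u) ((freeTensorQC 𝒬).compQC v),
    Function.Bijective ψ.toFun ∧
    ψ.toFun (some ⟨u, Relation.EqvGen.refl u⟩) = some ⟨v, Relation.EqvGen.refl v⟩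

/-- The hypoplactic congruence: `u ∼̈ v` iff there is a quasi-crystal isomorphism between
the connected components of `u` and `v` in `F^⊗̈(𝒬)` mapping `u` to `v`. -/
def hypoRel {S : QCSetting V ι} {Q : Type*} (𝒬 : QC S Q)
    (u v : FreeMonoid Q) : Prop :=
  ∃ ψ : QCHom ((freeQTensorQC 𝒬).compQC u) ((freeQTensorQC 𝒬).compQC v),
    Function.Bijective ψ.toFun ∧
    ψ.toFun (some ⟨u, Relation.EqvGen.refl u⟩) = some ⟨v, Relation.EqvGen.refl v⟩

/-! ## Quasi-crystal monoids -/

/-- A monoid is equidivisible if whenever `x₁y₁ = x₂y₂` one of the factorizations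
refines the other. -/
def Equidivisible (M : Type*) [Monoid M] : Prop :=
  ∀ x₁ x₂ y₁ y₂ : M, x₁ * y₁ = x₂ * y₂ →
    ∃ z : M, (x₂ = x₁ * z ∧ y₁ = z * y₂) ∨ (x₁ = x₂ * z ∧ y₂ = z * y₁)

/-- A `⊗`-quasi-crystal monoid: a seminormal quasi-crystal structure on a monoid whose
structure maps interact with the multiplication by the tensor-product rules. -/
structure IsTensorQCMon {S : QCSetting V ι} {M : Type*} [Monoid M] (𝒬 : QC S M) : Prop where
  seminormal : 𝒬.IsSeminormal
  wt_mul : ∀ x y, 𝒬.wt (x * y) = 𝒬.wt x + 𝒬.wt y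
  eps_mul : ∀ i x y, 𝒬.ε i (x * y) =
    max (𝒬.ε i x) (𝒬.ε i y + ((-(S.pair (𝒬.wt x) i) : ℤ) : WithTop ℤ))
  phi_mul : ∀ i x y, 𝒬.φ i (x * y) =
    max (𝒬.φ i x + ((S.pair (𝒬.wt y) i : ℤ) : WithTop ℤ)) (𝒬.φ i y)
  e_mul : ∀ i x y, 𝒬.e i (x * y) =
    if 𝒬.ε i y ≤ 𝒬.φ i x then (𝒬.e i x).map (· * y) else (𝒬.e i y).map (x * ·)
  f_mul : ∀ i x y, 𝒬.f i (x * y) =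
    if 𝒬.ε i y < 𝒬.φ i x then (𝒬.f i x).map (· * y) else (𝒬.f i y).map (x * ·)

/-- A `⊗̈`-quasi-crystal monoid: a seminormal quasi-crystal structure on a monoid such
that `x ⊗̈ y ↦ x·y` induces a quasi-crystal homomorphism `M ⊗̈ M → M`. -/
def IsQTensorQCMon {S : QCSetting V ι} {M : Type*} [Monoid M] (𝒬 : QC S M) : Prop :=
  𝒬.IsSeminormal ∧
  ∃ ψ : QCHom (𝒬.qtensor 𝒬) 𝒬, ψ.toFun = Option.map (fun p => p.1 * p.2)

/-! ## The bicyclic monoid with zero `B₀` and the monoid `Z₀` -/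

/-- The bicyclic monoid `⟨−, + | (+)(−) = ε⟩`: elements are normal forms `(−)^a(+)^b`. -/
structure Bic where
  neg : ℕ
  pos : ℕ
deriving DecidableEq

instance : Mul Bic :=
  ⟨fun x y => ⟨x.neg + (y.neg - x.pos), y.pos + (x.pos - y.neg)⟩⟩

theorem Bic.mul_def (x y : Bic) :
    x * y = ⟨x.neg + (y.neg - x.pos), y.pos + (x.pos - y.neg)⟩ := rfl

instance : One Bic := ⟨⟨0, 0⟩⟩

theorem Bic.one_def : (1 : Bic) = ⟨0, 0⟩ := rfl

instance : Monoid Bic where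
  mul_assoc x y z := by
    simp only [Bic.mul_def, Bic.mk.injEq]
    omega
  one_mul x := by
    simp only [Bic.one_def, Bic.mul_def]
    cases x
    simp only [Bic.mk.injEq]
    omega
  mul_one x := by
    simp only [Bic.one_def, Bic.mul_def]
    cases x
    simp only [Bic.mk.injEq]
    omega

/-- The bicyclic monoid with a zero element adjoined,
`B₀ = ⟨0, −, + | (+)(−) = ε, 0x = x0 = 0⟩`. -/
abbrev B0 : Type := WithZero Bic

/-- The monoid `Z₀ = ⟨0, −, + | (+)(−) = 0, 0x = x0 = 0⟩`: the nonzero elements are the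
normal forms `(−)^a(+)^b`. -/
inductive Z0 : Type
  | zero : Z0
  | word : ℕ → ℕ → Z0
deriving DecidableEq

instance : Mul Z0 :=
  ⟨fun x y => match x, y with
    | Z0.zero, _ => Z0.zero
    | _, Z0.zero => Z0.zero
    | Z0.word a b, Z0.word c d =>
        if 0 < b ∧ 0 < c then Z0.zero else Z0.word (a + c) (b + d)⟩

instance : One Z0 := ⟨Z0.word 0 0⟩

instance : Zero Z0 := ⟨Z0.zero⟩

theorem Z0.one_def : (1 : Z0) = Z0.word 0 0 := rfl
theorem Z0.zero_def : (0 : Z0) = Z0.zero := rfl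
theorem Z0.zero_mul' (x : Z0) : Z0.zero * x = Z0.zero := by cases x <;> rfl
theorem Z0.mul_zero' (x : Z0) : x * Z0.zero = Z0.zero := by cases x <;> rfl
theorem Z0.word_mul_word (a b c d : ℕ) :
    Z0.word a b * Z0.word c d =
      if 0 < b ∧ 0 < c then Z0.zero else Z0.word (a + c) (b + d) := rfl

instance : MonoidWithZero Z0 where
  mul_assoc x y z := by
    cases x <;> cases y <;> cases z <;>
      simp only [Z0.zero_mul', Z0.mul_zero', Z0.word_mul_word]
    · split_ifs <;> simp_all [Z0.zero_mul', Z0.mul_zero', Z0.word_mul_word] <;>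
        split_ifs <;> simp_all <;> omega
  one_mul x := by
    cases x
    · rfl
    · simp [Z0.one_def, Z0.word_mul_word]
  mul_one x := by
    cases x
    · rfl
    · simp [Z0.one_def, Z0.word_mul_word]
  zero_mul x := by cases x <;> rfl
  mul_zero x := by cases x <;> rfl

/-! ## Signature maps -/

/-- The `i`-signature map for the tensor product `⊗`:
`sgn_i^⊗(w) = 0` if `ε̈_i(w) = +∞`, and `(−)^{ε̈_i(w)}(+)^{φ̈_i(w)}` otherwise. -/
noncomputable def tsgn {V : Type*} [NormedAddCommGroup V] [InnerProductSpace ℝ V] {ι : Type*}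
    {S : QCSetting V ι} {Q : Type*} (𝒬 : QC S Q) (i : ι) (w : FreeMonoid Q) : B0 :=
  if freeEps 𝒬 i (FreeMonoid.toList w) = ⊤ then 0
  else ↑(Bic.mk (WithTop.untopD 0 (freeEps 𝒬 i (FreeMonoid.toList w))).toNat
      (WithTop.untopD 0 (freePhi 𝒬 i (FreeMonoid.toList w))).toNat)

/-- The `i`-signature map for the quasi-tensor product `⊗̈`:
`sgn_i^⊗̈(w) = 0` if `ε̈_i(w) = +∞`, and `(−)^{ε̈_i(w)}(+)^{φ̈_i(w)}` otherwise. -/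
noncomputable def qsgn {V : Type*} [NormedAddCommGroup V] [InnerProductSpace ℝ V] {ι : Type*}
    {S : QCSetting V ι} {Q : Type*} (𝒬 : QC S Q) (i : ι) (w : FreeMonoid Q) : Z0 :=
  if qfreeEps 𝒬 i (FreeMonoid.toList w) = ⊤ then 0
  else Z0.word (WithTop.untopD 0 (qfreeEps 𝒬 i (FreeMonoid.toList w))).toNat
      (WithTop.untopD 0 (qfreePhi 𝒬 i (FreeMonoid.toList w))).toNat

/-!
With linearly independent weights, for each `i` every letter is either isolated (`ε̈_i = +∞`),
`i`-neutral, a minus letter `(ε̈_i, φ̈_i) = (1, 0)` or a plus letter `(0, 1)`. In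
`F^⊗(Q)` the minus and plus letters of a word cancel in bracket fashion, and the word collapses
to `ε̈_i = +∞` in `F^⊗̈(Q)` exactly when some pair cancels, that is when `ε̈_i` is smaller than the
number of minus letters. That number is read off the weight, again by linear independence, so a
plactic isomorphism of components preserves `ε̈_i` and `φ̈_i` of `F^⊗̈(Q)`. Since `F^⊗̈(Q)` is
`F^⊗(Q)` with the edges at collapsed vertices deleted, the isomorphism restricts to the
`F^⊗̈(Q)`-components.
-/

section OptIter

variable {Q : Type*} {g : Q → Option Q} {x : Q}

theorem optIter_succ (g : Q → Option Q) (k : ℕ) (x : Q) :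
    optIter g (k + 1) x = (optIter g k x).bind g := by
  simp [optIter, Function.iterate_succ_apply']

theorem optIter_isSome_of_le {k m : ℕ} (hkm : k ≤ m) (hm : (optIter g m x).isSome) :
    (optIter g k x).isSome := by
  induction m, hkm using Nat.le_induction with
  | base => exact hm
  | succ m _ ih =>
    rw [optIter_succ] at hm
    exact ih (Option.isSome_of_isSome_bind hm)

theorem isSome_iff_pos_of_isGreatest {n : ℕ}
    (hn : IsGreatest {k | (optIter g k x).isSome} n) : (g x).isSome ↔ 0 < n := by
  have h1 : optIter g 1 x = g x := by simp [optIter]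
  rw [← h1]
  exact ⟨fun h => hn.2 h, fun h => optIter_isSome_of_le h hn.1⟩

theorem exists_of_optIter_two_isSome (h : (optIter g 2 x).isSome) :
    ∃ y z, g x = some y ∧ g y = some z := by
  simp only [optIter, Function.iterate_succ_apply', Function.iterate_zero_apply,
    Option.bind_some] at h
  obtain ⟨y, hy⟩ := Option.isSome_iff_exists.mp (Option.isSome_of_isSome_bind h)
  rw [hy, Option.bind_some] at h
  exact ⟨y, _, hy, (Option.isSome_iff_exists.mp h).choose_spec⟩

end OptIter

theorem QCSetting.pair_add (S : QCSetting V ι) (v w : S.Λ) (i : ι) :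
    S.pair (v + w) i = S.pair v i + S.pair w i := by
  have h : ((S.pair (v + w) i : ℤ) : ℝ) = S.pair v i + S.pair w i := by
    rw [S.pair_spec, S.pair_spec, S.pair_spec, AddSubgroup.coe_add, inner_add_left, mul_add,
      add_div]
  exact_mod_cast h

theorem QCSetting.pair_zero (S : QCSetting V ι) (i : ι) : S.pair 0 i = 0 := by
  simpa using S.pair_add 0 0 i

theorem LinearIndepOn.add_ne_two_smul {s : Set V} (hs : LinearIndepOn ℝ id s) {a b c : V}
    (ha : a ∈ s) (hb : b ∈ s) (hc : c ∈ s) (hab : a ≠ b) (hcb : c ≠ b) :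
    a + c ≠ (2 : ℝ) • b := by
  intro h
  set l : V →₀ ℝ := Finsupp.single a 1 + Finsupp.single c 1 - Finsupp.single b 2
  have hl : l ∈ Finsupp.supported ℝ ℝ s :=
    Submodule.sub_mem _ (Submodule.add_mem _ (Finsupp.single_mem_supported ℝ _ ha)
      (Finsupp.single_mem_supported ℝ _ hc)) (Finsupp.single_mem_supported ℝ _ hb)
  have hl0 := linearIndepOn_iff.mp hs l hl (by simp [l, h])
  have hlb : l b = -2 := by simp [l, hab, hcb]
  simp [hl0] at hlb

namespace QC

variable {S : QCSetting V ι} {Q Q' : Type*}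

def Adj (𝒬 : QC S Q) (x y : Q) : Prop :=
  ∃ i, 𝒬.f i x = some y ∨ 𝒬.f i y = some x ∨ 𝒬.e i x = some y ∨ 𝒬.e i y = some x

theorem compQC_f_eq_some_iff (𝒬 : QC S Q) {u : Q} {i : ι} {x y : {w // 𝒬.conn u w}} :
    (𝒬.compQC u).f i x = some y ↔ 𝒬.f i x.1 = some y.1 :=
  Option.pmap_eq_some_iff.trans
    ⟨fun ⟨_, _, hx, hy⟩ => by subst hy; exact hx, fun hx => ⟨_, y.2, hx, rfl⟩⟩

theorem compQC_e_eq_some_iff (𝒬 : QC S Q) {u : Q} {i : ι} {x y : {w // 𝒬.conn u w}} :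
    (𝒬.compQC u).e i x = some y ↔ 𝒬.e i x.1 = some y.1 :=
  Option.pmap_eq_some_iff.trans
    ⟨fun ⟨_, _, hx, hy⟩ => by subst hy; exact hx, fun hx => ⟨_, y.2, hx, rfl⟩⟩

/-- The domains of `e i` and `f i` are those forced by seminormality. -/
structure HasSeminormalDomains (𝒬 : QC S Q) : Prop where
  e_isSome_iff : ∀ i x, (𝒬.e i x).isSome ↔ 𝒬.ε i x ≠ ⊤ ∧ 0 < 𝒬.ε i x
  f_isSome_iff : ∀ i x, (𝒬.f i x).isSome ↔ 𝒬.ε i x ≠ ⊤ ∧ 0 < 𝒬.φ i x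

theorem HasSeminormalDomains.compQC {𝒬 : QC S Q} (h𝒬 : 𝒬.HasSeminormalDomains) (u : Q) :
    (𝒬.compQC u).HasSeminormalDomains where
  e_isSome_iff i x := by
    rw [show ((𝒬.compQC u).e i x).isSome = (𝒬.e i x.1).isSome from Option.isSome_pmap]
    exact h𝒬.e_isSome_iff i x.1
  f_isSome_iff i x := by
    rw [show ((𝒬.compQC u).f i x).isSome = (𝒬.f i x.1).isSome from Option.isSome_pmap]
    exact h𝒬.f_isSome_iff i x.1

structure IsIso (𝒬 : QC S Q) (𝒬' : QC S Q') (σ : Q ≃ Q') : Prop where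
  wt_eq : ∀ x, 𝒬'.wt (σ x) = 𝒬.wt x
  eps_eq : ∀ i x, 𝒬'.ε i (σ x) = 𝒬.ε i x
  phi_eq : ∀ i x, 𝒬'.φ i (σ x) = 𝒬.φ i x
  e_eq_some_iff : ∀ i x y, 𝒬'.e i (σ x) = some (σ y) ↔ 𝒬.e i x = some y
  f_eq_some_iff : ∀ i x y, 𝒬'.f i (σ x) = some (σ y) ↔ 𝒬.f i x = some y

def IsIso.toQCHom {𝒬 : QC S Q} {𝒬' : QC S Q'} {σ : Q ≃ Q'} (hσ : 𝒬.IsIso 𝒬' σ) :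
    QCHom 𝒬 𝒬' where
  toFun := Option.map σ
  map_none := rfl
  wt_eq x y h := by cases Option.some_inj.mp h; exact hσ.wt_eq x
  eps_eq i x y h := by cases Option.some_inj.mp h; exact hσ.eps_eq i x
  phi_eq i x y h := by cases Option.some_inj.mp h; exact hσ.phi_eq i x
  comm_e i x x' y y' he h h' := by
    cases Option.some_inj.mp h; cases Option.some_inj.mp h'; exact (hσ.e_eq_some_iff i x x').2 he
  comm_f i x x' y y' hf h h' := by
    cases Option.some_inj.mp h; cases Option.some_inj.mp h'; exact (hσ.f_eq_some_iff i x x').2 hf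

end QC

namespace QCHom

variable {S : QCSetting V ι} {Q Q' : Type*} {𝒬 : QC S Q} {𝒬' : QC S Q'}

noncomputable def toEquiv (ψ : QCHom 𝒬 𝒬') (hψ : Function.Bijective ψ.toFun) : Q ≃ Q' :=
  (Equiv.ofBijective ψ.toFun hψ).removeNone

theorem toFun_some (ψ : QCHom 𝒬 𝒬') (hψ : Function.Bijective ψ.toFun) (x : Q) :
    ψ.toFun (some x) = some (ψ.toEquiv hψ x) := by
  refine (Equiv.removeNone_some (Equiv.ofBijective ψ.toFun hψ) ?_).symm
  rcases hx : ψ.toFun (some x) with _ | y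
  · exact absurd (hψ.1 (hx.trans ψ.map_none.symm)) (Option.some_ne_none x)
  · exact ⟨y, hx⟩

theorem isIso_toEquiv (ψ : QCHom 𝒬 𝒬') (hψ : Function.Bijective ψ.toFun)
    (h𝒬 : 𝒬.HasSeminormalDomains) (h𝒬' : 𝒬'.HasSeminormalDomains) :
    𝒬.IsIso 𝒬' (ψ.toEquiv hψ) := by
  set σ := ψ.toEquiv hψ
  have wt_eq x : 𝒬'.wt (σ x) = 𝒬.wt x := ψ.wt_eq x _ (ψ.toFun_some hψ x)
  have eps_eq i x : 𝒬'.ε i (σ x) = 𝒬.ε i x := ψ.eps_eq i x _ (ψ.toFun_some hψ x)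
  have phi_eq i x : 𝒬'.φ i (σ x) = 𝒬.φ i x := ψ.phi_eq i x _ (ψ.toFun_some hψ x)
  refine ⟨wt_eq, eps_eq, phi_eq, fun i x y => ⟨fun he => ?_, fun he => ?_⟩,
    fun i x y => ⟨fun hf => ?_, fun hf => ?_⟩⟩
  -- an edge at `σ x` forces, through `ε` and `φ`, an edge at `x`, which `ψ` carries to `σ x`
  · obtain ⟨t, ht⟩ := Option.isSome_iff_exists.mp <| (h𝒬.e_isSome_iff i x).2 <| by
      simpa only [eps_eq] using (h𝒬'.e_isSome_iff i (σ x)).1 (by simp [he])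
    rw [ψ.comm_e i x t _ _ ht (ψ.toFun_some hψ x) (ψ.toFun_some hψ t), Option.some_inj,
      σ.apply_eq_iff_eq] at he
    exact he ▸ ht
  · exact ψ.comm_e i x y _ _ he (ψ.toFun_some hψ x) (ψ.toFun_some hψ y)
  · obtain ⟨t, ht⟩ := Option.isSome_iff_exists.mp <| (h𝒬.f_isSome_iff i x).2 <| by
      simpa only [eps_eq, phi_eq] using (h𝒬'.f_isSome_iff i (σ x)).1 (by simp [hf])
    rw [ψ.comm_f i x t _ _ ht (ψ.toFun_some hψ x) (ψ.toFun_some hψ t), Option.some_inj,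
      σ.apply_eq_iff_eq] at hf
    exact hf ▸ ht
  · exact ψ.comm_f i x y _ _ hf (ψ.toFun_some hψ x) (ψ.toFun_some hψ y)

end QCHom

namespace QC

variable {S : QCSetting V ι} {M : Type*}

/-- `P'` arises from `P` by keeping the weights and deleting the edges at the vertices
where `P'.ε` is infinite. -/
structure IsTruncationOf (P' P : QC S M) : Prop where
  wt_eq : ∀ x, P'.wt x = P.wt x
  e_eq_some_iff : ∀ i x y, P'.e i x = some y ↔ P'.ε i x ≠ ⊤ ∧ P.e i x = some y
  f_eq_some_iff : ∀ i x y, P'.f i x = some y ↔ P'.ε i x ≠ ⊤ ∧ P.f i x = some y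

namespace IsTruncationOf

variable {P P' : QC S M} (hP : P'.IsTruncationOf P)
include hP

theorem adj {x y : M} (hxy : P'.Adj x y) : P.Adj x y := by
  obtain ⟨i, h | h | h | h⟩ := hxy
  · exact ⟨i, .inl ((hP.f_eq_some_iff i _ _).1 h).2⟩
  · exact ⟨i, .inr <| .inl ((hP.f_eq_some_iff i _ _).1 h).2⟩
  · exact ⟨i, .inr <| .inr <| .inl ((hP.e_eq_some_iff i _ _).1 h).2⟩
  · exact ⟨i, .inr <| .inr <| .inr ((hP.e_eq_some_iff i _ _).1 h).2⟩

theorem conn {x y : M} (hxy : P'.conn x y) : P.conn x y :=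
  Relation.EqvGen.mono (fun _ _ => hP.adj) _ _ hxy

theorem conn_map {u v : M} (σ : {w // P.conn u w} → {w // P.conn v w})
    (hσ : ∀ x y, P'.Adj x.1 y.1 → P'.Adj (σ x).1 (σ y).1) {a b : M} (hab : P'.conn a b)
    (ha : P.conn u a) (hb : P.conn u b) : P'.conn (σ ⟨a, ha⟩).1 (σ ⟨b, hb⟩).1 := by
  induction hab with
  | rel a b hab => exact .rel _ _ (hσ ⟨a, ha⟩ ⟨b, hb⟩ hab)
  | refl => exact .refl _
  | symm a b _ ih => exact .symm _ _ (ih hb ha)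
  | trans a c b _ hcb ih₁ ih₂ =>
    have hc : P.conn u c := .symm _ _ (.trans _ _ _ (hP.conn hcb) (.symm _ _ hb))
    exact .trans _ _ _ (ih₁ ha hc) (ih₂ hc hb)

variable {u v : M} {σ : {w // P.conn u w} ≃ {w // P.conn v w}}
  (hσ : (P.compQC u).IsIso (P.compQC v) σ) (hε : ∀ i x, P'.ε i (σ x).1 = P'.ε i x.1)
include hσ hε

theorem e_map_eq_some_iff {i : ι} {x y : {w // P.conn u w}} :
    P'.e i (σ x).1 = some (σ y).1 ↔ P'.e i x.1 = some y.1 := by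
  rw [hP.e_eq_some_iff, hP.e_eq_some_iff, hε, ← compQC_e_eq_some_iff, ← compQC_e_eq_some_iff,
    hσ.e_eq_some_iff]

theorem f_map_eq_some_iff {i : ι} {x y : {w // P.conn u w}} :
    P'.f i (σ x).1 = some (σ y).1 ↔ P'.f i x.1 = some y.1 := by
  rw [hP.f_eq_some_iff, hP.f_eq_some_iff, hε, ← compQC_f_eq_some_iff, ← compQC_f_eq_some_iff,
    hσ.f_eq_some_iff]

theorem adj_map_iff {x y : {w // P.conn u w}} : P'.Adj (σ x).1 (σ y).1 ↔ P'.Adj x.1 y.1 := by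
  simp only [Adj, hP.e_map_eq_some_iff hσ hε, hP.f_map_eq_some_iff hσ hε]

theorem conn_map_iff (huv : σ ⟨u, .refl u⟩ = ⟨v, .refl v⟩) (x : {w // P.conn u w}) :
    P'.conn u x.1 ↔ P'.conn v (σ x).1 := by
  constructor
  · intro hx
    simpa [huv] using hP.conn_map σ (fun x y => (hP.adj_map_iff hσ hε).2) hx (.refl u) x.2
  · intro hx
    have hvu : σ.symm ⟨v, .refl v⟩ = ⟨u, .refl u⟩ := σ.symm_apply_eq.2 huv.symm
    simpa [hvu] using hP.conn_map σ.symm (fun x y hxy => by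
      rw [← hP.adj_map_iff hσ hε]; simpa using hxy) hx (.refl v) (σ x).2

def restrict (huv : σ ⟨u, .refl u⟩ = ⟨v, .refl v⟩) :
    {w // P'.conn u w} ≃ {w // P'.conn v w} :=
  (Equiv.subtypeSubtypeEquivSubtype hP.conn).symm.trans <|
    (σ.subtypeEquiv (hP.conn_map_iff hσ hε huv)).trans (Equiv.subtypeSubtypeEquivSubtype hP.conn)

theorem restrict_apply (huv : σ ⟨u, .refl u⟩ = ⟨v, .refl v⟩) (x : {w // P'.conn u w}) :
    (hP.restrict hσ hε huv x).1 = (σ ⟨x.1, hP.conn x.2⟩).1 := rfl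

theorem isIso_restrict (hφ : ∀ i x, P'.φ i (σ x).1 = P'.φ i x.1)
    (huv : σ ⟨u, .refl u⟩ = ⟨v, .refl v⟩) :
    (P'.compQC u).IsIso (P'.compQC v) (hP.restrict hσ hε huv) where
  wt_eq x := (hP.wt_eq _).trans <| (hσ.wt_eq _).trans (hP.wt_eq x.1).symm
  eps_eq i x := hε i _
  phi_eq i x := hφ i _
  e_eq_some_iff i x y := by
    rw [compQC_e_eq_some_iff, compQC_e_eq_some_iff, restrict_apply, restrict_apply,
      hP.e_map_eq_some_iff hσ hε]
  f_eq_some_iff i x y := by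
    rw [compQC_f_eq_some_iff, compQC_f_eq_some_iff, restrict_apply, restrict_apply,
      hP.f_map_eq_some_iff hσ hε]

theorem restrict_base (huv : σ ⟨u, .refl u⟩ = ⟨v, .refl v⟩) :
    hP.restrict hσ hε huv ⟨u, .refl u⟩ = ⟨v, .refl v⟩ :=
  Subtype.ext ((hP.restrict_apply hσ hε huv _).trans (congrArg Subtype.val huv))

end IsTruncationOf

end QC

namespace QC

variable {S : QCSetting V ι} {Q : Type*} {𝒬 : QC S Q}

theorem false_of_wt_eq_add_of_wt_eq_sub
    (hli : LinearIndependent ℝ ((↑) : (Set.range fun x : Q => ((𝒬.wt x : V))) → V))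
    {x y z : Q} {i : ι} (hy : (𝒬.wt y : V) = 𝒬.wt x + S.simple i)
    (hz : (𝒬.wt z : V) = 𝒬.wt x - S.simple i) : False := by
  have hα : S.simple i ≠ 0 := S.simple_indep.ne_zero i
  refine (linearIndependent_subtype_iff.mp hli).add_ne_two_smul ⟨y, rfl⟩ ⟨x, rfl⟩ ⟨z, rfl⟩
    (by simpa [hy] using hα) (by simpa [hz] using hα) ?_
  change (𝒬.wt y : V) + 𝒬.wt z = (2 : ℝ) • (𝒬.wt x : V)
  rw [hy, hz, two_smul]
  abel

namespace IsSeminormal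

variable (h : 𝒬.IsSeminormal)
include h

theorem eps_nonneg (i : ι) (x : Q) : 0 ≤ 𝒬.ε i x := by
  by_cases hx : 𝒬.ε i x = ⊤
  · simp [hx]
  · obtain ⟨n, hn, -⟩ := h.eps_spec i x hx
    simp [hn]

theorem phi_nonneg (i : ι) (x : Q) : 0 ≤ 𝒬.φ i x := by
  by_cases hx : 𝒬.ε i x = ⊤
  · simp [h.phi_eq, hx]
  · obtain ⟨n, hn, -⟩ := h.phi_spec i x hx
    simp [hn]

theorem phi_eq_top_iff {i : ι} {x : Q} : 𝒬.φ i x = ⊤ ↔ 𝒬.ε i x = ⊤ := by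
  simp [h.phi_eq]

theorem hasSeminormalDomains : 𝒬.HasSeminormalDomains where
  e_isSome_iff i x := by
    by_cases hx : 𝒬.ε i x = ⊤
    · simp [hx, h.e_of_top i x hx]
    · obtain ⟨n, hn, hgr⟩ := h.eps_spec i x hx
      simp [hn, isSome_iff_pos_of_isGreatest hgr]
  f_isSome_iff i x := by
    by_cases hx : 𝒬.ε i x = ⊤
    · simp [hx, h.f_of_top i x hx]
    · obtain ⟨n, hn, hgr⟩ := h.phi_spec i x hx
      simp [hx, hn, isSome_iff_pos_of_isGreatest hgr]

theorem letter_cases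
    (hli : LinearIndependent ℝ ((↑) : (Set.range fun x : Q => ((𝒬.wt x : V))) → V))
    (i : ι) (x : Q) (hx : 𝒬.ε i x ≠ ⊤) :
    (𝒬.ε i x = 0 ∧ 𝒬.φ i x = 0 ∧ S.pair (𝒬.wt x) i = 0) ∨
    (𝒬.ε i x = 1 ∧ 𝒬.φ i x = 0 ∧ S.pair (𝒬.wt x) i = -1) ∨
    (𝒬.ε i x = 0 ∧ 𝒬.φ i x = 1 ∧ S.pair (𝒬.wt x) i = 1) := by
  obtain ⟨n, hn, hgn⟩ := h.eps_spec i x hx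
  obtain ⟨m, hm, hgm⟩ := h.phi_spec i x hx
  have hnm : (m : ℤ) = n + S.pair (𝒬.wt x) i := by
    have := h.phi_eq i x
    rw [hm, hn] at this
    exact_mod_cast this
  -- two consecutive `e`-steps, two `f`-steps, or one of each would produce three letters
  -- whose weights are in arithmetic progression
  have hn1 : n ≤ 1 := by
    by_contra! hn2
    obtain ⟨y, z, hy, hz⟩ := exists_of_optIter_two_isSome (optIter_isSome_of_le hn2 hgn.1)
    refine false_of_wt_eq_add_of_wt_eq_sub hli (h.wt_e i y z hz) (x := y) (z := x) ?_
    rw [h.wt_e i x y hy]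
    abel
  have hm1 : m ≤ 1 := by
    by_contra! hm2
    obtain ⟨y, z, hy, hz⟩ := exists_of_optIter_two_isSome (optIter_isSome_of_le hm2 hgm.1)
    refine false_of_wt_eq_add_of_wt_eq_sub hli (x := y) (y := x) ?_ (h.wt_f i y z hz)
    rw [h.wt_f i x y hy]
    abel
  have hnm1 : ¬(n = 1 ∧ m = 1) := by
    rintro ⟨rfl, rfl⟩
    obtain ⟨y, hy⟩ := Option.isSome_iff_exists.mp ((isSome_iff_pos_of_isGreatest hgn).2 one_pos)
    obtain ⟨z, hz⟩ := Option.isSome_iff_exists.mp ((isSome_iff_pos_of_isGreatest hgm).2 one_pos)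
    exact false_of_wt_eq_add_of_wt_eq_sub hli (h.wt_e i x y hy) (h.wt_f i x z hz)
  rw [hn, hm]
  clear hgn hgm hn hm
  interval_cases n <;> interval_cases m <;> norm_num <;> omega

end IsSeminormal

end QC

section FreeTensor

variable {S : QCSetting V ι} {Q : Type*} {𝒬 : QC S Q} (i : ι)

theorem freeTensorQC_e (w : FreeMonoid Q) : (freeTensorQC 𝒬).e i w = freeE 𝒬 i w := by
  change Option.map _ (freeE 𝒬 i w) = _
  cases freeE 𝒬 i w <;> rfl

theorem freeTensorQC_f (w : FreeMonoid Q) : (freeTensorQC 𝒬).f i w = freeF 𝒬 i w := by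
  change Option.map _ (freeF 𝒬 i w) = _
  cases freeF 𝒬 i w <;> rfl

theorem freePhi_nonneg : ∀ w : List Q, 0 ≤ freePhi 𝒬 i w
  | [] => le_rfl
  | _ :: w => le_max_of_le_right (freePhi_nonneg w)

theorem ne_top_of_mem_of_freeEps_ne_top {x : Q} : ∀ {w : List Q}, freeEps 𝒬 i w ≠ ⊤ → x ∈ w →
    𝒬.ε i x ≠ ⊤
  | y :: w, hw, hx => by
    rw [freeEps, ne_eq, max_eq_top, not_or, WithTop.add_eq_top, not_or] at hw
    rcases List.mem_cons.mp hx with rfl | hx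
    · exact hw.1
    · exact ne_top_of_mem_of_freeEps_ne_top hw.2.1 hx

namespace QC.IsSeminormal

variable {i} (h : 𝒬.IsSeminormal)
include h

theorem freeEps_nonneg : ∀ w : List Q, 0 ≤ freeEps 𝒬 i w
  | [] => le_rfl
  | x :: _ => le_max_of_le_left (h.eps_nonneg i x)

theorem freePhi_eq_freeEps_add : ∀ w : List Q,
    freePhi 𝒬 i w = freeEps 𝒬 i w + ((S.pair (freeWt 𝒬 w) i : ℤ) : WithTop ℤ)
  | [] => by simp [freePhi, freeEps, freeWt, S.pair_zero]
  | x :: w => by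
    rw [freePhi, freeEps, freePhi_eq_freeEps_add w, h.phi_eq, freeWt, S.pair_add]
    induction 𝒬.ε i x <;> induction freeEps 𝒬 i w <;>
      simp only [← WithTop.coe_add, ← WithTop.coe_max, WithTop.coe_inj, WithTop.top_add,
        max_top_left, max_top_right]
    omega

theorem freeE_isSome_iff (w : List Q) :
    (freeE 𝒬 i w).isSome ↔ freeEps 𝒬 i w ≠ ⊤ ∧ 0 < freeEps 𝒬 i w := by
  induction w with
  | nil => simp [freeE, freeEps]
  | cons x w ih =>
    have hx := h.eps_nonneg i x
    have hx' := h.phi_nonneg i x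
    have hw : 0 ≤ freeEps 𝒬 i w := h.freeEps_nonneg w
    rw [freeE]
    split_ifs with hle <;>
    simp only [Option.isSome_map, h.hasSeminormalDomains.e_isSome_iff, ih, freeEps,
      h.phi_eq] at hle hx' ⊢ <;>
    generalize 𝒬.ε i x = A at * <;>
    generalize freeEps 𝒬 i w = B at * <;>
    induction A <;> induction B <;>
    simp only [← WithTop.coe_add, ← WithTop.coe_max, WithTop.coe_le_coe, WithTop.top_add,
      max_top_left, max_top_right, WithTop.coe_nonneg, WithTop.coe_ne_top, WithTop.coe_pos,
      ne_eq, not_true, false_and, not_false_eq_true, true_and, top_le_iff, le_top,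
      iff_false] at * <;>
    omega

theorem freeF_isSome_iff (w : List Q) :
    (freeF 𝒬 i w).isSome ↔ freeEps 𝒬 i w ≠ ⊤ ∧ 0 < freePhi 𝒬 i w := by
  induction w with
  | nil => simp [freeF, freeEps, freePhi]
  | cons x w ih =>
    have hx := h.eps_nonneg i x
    have hw : 0 ≤ freeEps 𝒬 i w := h.freeEps_nonneg w
    have hw' : 0 ≤ freePhi 𝒬 i w := freePhi_nonneg i w
    rw [freeF]
    split_ifs with hlt <;>
    simp only [Option.isSome_map, h.hasSeminormalDomains.f_isSome_iff, ih,
      h.freePhi_eq_freeEps_add, freeEps, freeWt, S.pair_add, h.phi_eq] at hlt hw' ⊢ <;>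
    generalize 𝒬.ε i x = A at * <;>
    generalize freeEps 𝒬 i w = B at * <;>
    induction A <;> induction B <;>
    simp only [← WithTop.coe_add, ← WithTop.coe_max, WithTop.coe_lt_coe, WithTop.top_add,
      max_top_left, max_top_right, WithTop.coe_nonneg, WithTop.coe_ne_top, WithTop.coe_pos,
      ne_eq, not_true, false_and, not_false_eq_true, true_and, not_top_lt, WithTop.coe_lt_top,
      iff_false] at * <;>
    omega

theorem freeTensorQC_hasSeminormalDomains : (freeTensorQC 𝒬).HasSeminormalDomains where
  e_isSome_iff i w := by rw [freeTensorQC_e]; exact h.freeE_isSome_iff w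
  f_isSome_iff i w := by rw [freeTensorQC_f]; exact h.freeF_isSome_iff w

end QC.IsSeminormal

end FreeTensor

section QuasiTensor

variable {S : QCSetting V ι} {Q : Type*} {𝒬 : QC S Q} (i : ι)

theorem freeEps_le_qfreeEps : ∀ w : List Q, freeEps 𝒬 i w ≤ qfreeEps 𝒬 i w
  | [] => le_rfl
  | x :: w => by
    rw [freeEps, qfreeEps]
    split_ifs
    · exact le_top
    · exact max_le_max le_rfl (by gcongr; exact freeEps_le_qfreeEps w)

theorem qfreeEps_cons_ne_top {x : Q} {w : List Q} (hne : qfreeEps 𝒬 i (x :: w) ≠ ⊤) :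
    ¬(0 < 𝒬.φ i x ∧ 0 < qfreeEps 𝒬 i w) ∧ qfreeEps 𝒬 i w ≠ ⊤ := by
  rw [qfreeEps] at hne
  split_ifs at hne with hc
  · exact absurd rfl hne
  · refine ⟨hc, fun hw => hne ?_⟩
    simp [hw]

theorem qfreeEps_eq_of_ne_top : ∀ {w : List Q}, qfreeEps 𝒬 i w ≠ ⊤ →
    qfreeEps 𝒬 i w = freeEps 𝒬 i w
  | [], _ => rfl
  | x :: w, hne => by
    obtain ⟨hc, hw⟩ := qfreeEps_cons_ne_top i hne
    rw [qfreeEps, if_neg hc, freeEps, qfreeEps_eq_of_ne_top hw]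

theorem qfreePhi_eq_of_ne_top : ∀ {w : List Q}, qfreeEps 𝒬 i w ≠ ⊤ →
    qfreePhi 𝒬 i w = freePhi 𝒬 i w
  | [], _ => rfl
  | x :: w, hne => by
    obtain ⟨hc, hw⟩ := qfreeEps_cons_ne_top i hne
    rw [qfreePhi, if_neg hc, freePhi, qfreePhi_eq_of_ne_top hw]

theorem qfreeE_eq_of_ne_top : ∀ {w : List Q}, qfreeEps 𝒬 i w ≠ ⊤ →
    qfreeE 𝒬 i w = freeE 𝒬 i w
  | [], _ => rfl
  | x :: w, hne => by
    obtain ⟨hc, hw⟩ := qfreeEps_cons_ne_top i hne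
    rw [qfreeE, if_neg hc, freeE, qfreeEps_eq_of_ne_top i hw, qfreeE_eq_of_ne_top hw]

theorem qfreeF_eq_of_ne_top : ∀ {w : List Q}, qfreeEps 𝒬 i w ≠ ⊤ →
    qfreeF 𝒬 i w = freeF 𝒬 i w
  | [], _ => rfl
  | x :: w, hne => by
    obtain ⟨hc, hw⟩ := qfreeEps_cons_ne_top i hne
    rw [qfreeF, if_neg hc, freeF, qfreeEps_eq_of_ne_top i hw, qfreeF_eq_of_ne_top hw]

theorem freeQTensorQC_e (w : FreeMonoid Q) : (freeQTensorQC 𝒬).e i w = qfreeE 𝒬 i w := by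
  change Option.map _ (qfreeE 𝒬 i w) = _
  cases qfreeE 𝒬 i w <;> rfl

theorem freeQTensorQC_f (w : FreeMonoid Q) : (freeQTensorQC 𝒬).f i w = qfreeF 𝒬 i w := by
  change Option.map _ (qfreeF 𝒬 i w) = _
  cases qfreeF 𝒬 i w <;> rfl

variable {i} (h : 𝒬.IsSeminormal)
include h

theorem QC.IsSeminormal.qfreePhi_eq_top : ∀ {w : List Q}, qfreeEps 𝒬 i w = ⊤ →
    qfreePhi 𝒬 i w = ⊤
  | [], hw => by simp [qfreeEps] at hw
  | x :: w, hw => by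
    rw [qfreeEps] at hw
    rw [qfreePhi]
    split_ifs at hw ⊢
    · rfl
    · rcases max_eq_top.mp hw with hx | hw
      · simp [h.phi_eq_top_iff.2 hx]
      · simp [qfreePhi_eq_top (WithTop.add_eq_top.mp hw |>.resolve_right WithTop.coe_ne_top)]

theorem QC.IsSeminormal.qfreeE_eq_none_and_qfreeF_eq_none : ∀ {w : List Q},
    qfreeEps 𝒬 i w = ⊤ → qfreeE 𝒬 i w = none ∧ qfreeF 𝒬 i w = none
  | [], hw => by simp [qfreeEps] at hw
  | x :: w, hw => by
    rw [qfreeEps] at hw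
    rw [qfreeE, qfreeF]
    split_ifs at hw with hc
    · simp [hc]
    rw [if_neg hc, if_neg hc]
    by_cases hwt : qfreeEps 𝒬 i w = ⊤
    · obtain ⟨hE, hF⟩ := qfreeE_eq_none_and_qfreeF_eq_none hwt
      simp +contextual [hwt, hE, hF, top_le_iff, h.phi_eq_top_iff, h.e_of_top]
    · have hx : 𝒬.ε i x = ⊤ := by simpa [hwt] using hw
      simp [h.phi_eq_top_iff.2 hx, h.e_of_top i x hx, h.f_of_top i x hx, lt_top_iff_ne_top, hwt]

end QuasiTensor

theorem QC.IsSeminormal.freeQTensorQC_isTruncationOf {S : QCSetting V ι} {Q : Type*}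
    {𝒬 : QC S Q} (h : 𝒬.IsSeminormal) : (freeQTensorQC 𝒬).IsTruncationOf (freeTensorQC 𝒬) where
  wt_eq _ := rfl
  e_eq_some_iff i w y := by
    change _ ↔ qfreeEps 𝒬 i w ≠ ⊤ ∧ _
    rw [freeQTensorQC_e, freeTensorQC_e]
    by_cases hw : qfreeEps 𝒬 i w = ⊤
    · simp [(h.qfreeE_eq_none_and_qfreeF_eq_none hw).1, hw]
    · simp [qfreeE_eq_of_ne_top i hw, hw]
  f_eq_some_iff i w y := by
    change _ ↔ qfreeEps 𝒬 i w ≠ ⊤ ∧ _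
    rw [freeQTensorQC_f, freeTensorQC_f]
    by_cases hw : qfreeEps 𝒬 i w = ⊤
    · simp [(h.qfreeE_eq_none_and_qfreeF_eq_none hw).2, hw]
    · simp [qfreeF_eq_of_ne_top i hw, hw]

section Collapse

variable {S : QCSetting V ι} {Q : Type*} {𝒬 : QC S Q}

/-- The weight of a word determines the multiset of the weights of its letters. -/
theorem sum_map_eq_of_freeWt_eq
    (hli : LinearIndependent ℝ ((↑) : (Set.range fun x : Q => ((𝒬.wt x : V))) → V))
    (g : S.Λ → ℕ) {w w' : List Q} (hwt : freeWt 𝒬 w = freeWt 𝒬 w') :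
    (w.map fun x => g (𝒬.wt x)).sum = (w'.map fun x => g (𝒬.wt x)).sum := by
  classical
  let F (u : List Q) : V →₀ ℝ := (u.map fun x => Finsupp.single (𝒬.wt x : V) 1).sum
  let g' (v : V) : ℝ := if hv : v ∈ S.Λ then g ⟨v, hv⟩ else 0
  have hF (u : List Q) : F u ∈ Finsupp.supported ℝ ℝ (Set.range fun x : Q => (𝒬.wt x : V)) ∧
      Finsupp.linearCombination ℝ id (F u) = freeWt 𝒬 u ∧
      Finsupp.linearCombination ℝ g' (F u) = (u.map fun x => g (𝒬.wt x)).sum := by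
    induction u with
    | nil => simp [F, freeWt]
    | cons x u ih =>
      simp only [F, List.map_cons, List.sum_cons, map_add, Finsupp.linearCombination_single,
        one_smul, freeWt] at ih ⊢
      refine ⟨Submodule.add_mem _ (Finsupp.single_mem_supported ℝ _ ⟨x, rfl⟩) ih.1, ?_, ?_⟩
      · rw [ih.2.1]; rfl
      · rw [ih.2.2]; simp [g']
  have hFw : F w = F w' := sub_eq_zero.mp <| linearIndepOn_iff.mp
    (linearIndependent_subtype_iff.mp hli) _ (Submodule.sub_mem _ (hF w).1 (hF w').1)
    (by rw [map_sub, (hF w).2.1, (hF w').2.1, hwt, sub_self])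
  exact_mod_cast (hF w).2.2.symm.trans (hFw ▸ (hF w').2.2)

/-- The number of `i`-minus letters of `w`, provided no letter of `w` is `i`-isolated. -/
def mcount (𝒬 : QC S Q) (i : ι) (w : List Q) : ℕ :=
  (w.map fun x => if S.pair (𝒬.wt x) i = -1 then 1 else 0).sum

variable {i : ι} (h : 𝒬.IsSeminormal)
  (hli : LinearIndependent ℝ ((↑) : (Set.range fun x : Q => ((𝒬.wt x : V))) → V))
include h hli

/-- `a` counts the minus letters left unmatched by the plus letters to their left. -/
theorem QC.IsSeminormal.qfreeEps_eq_ite : ∀ {w : List Q}, (∀ x ∈ w, 𝒬.ε i x ≠ ⊤) →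
    ∃ a : ℕ, freeEps 𝒬 i w = ((a : ℤ) : WithTop ℤ) ∧ a ≤ mcount 𝒬 i w ∧
      qfreeEps 𝒬 i w = if a < mcount 𝒬 i w then ⊤ else ((a : ℤ) : WithTop ℤ)
  | [], _ => ⟨0, rfl, le_rfl, by simp [qfreeEps, mcount]⟩
  | x :: w, hw => by
    obtain ⟨a, ha, ham, hq⟩ := qfreeEps_eq_ite fun y hy => hw y (List.mem_cons_of_mem x hy)
    have hm : mcount 𝒬 i (x :: w) = mcount 𝒬 i w + if S.pair (𝒬.wt x) i = -1 then 1 else 0 := by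
      rw [mcount, List.map_cons, List.sum_cons, add_comm]; rfl
    -- a neutral, a minus or a plus first letter
    rcases h.letter_cases hli i x (hw x List.mem_cons_self) with
        ⟨he, hφ, hp⟩ | ⟨he, hφ, hp⟩ | ⟨he, hφ, hp⟩ <;>
      [refine ⟨a, ?_, ?_, ?_⟩; refine ⟨a + 1, ?_, ?_, ?_⟩; refine ⟨a - 1, ?_, ?_, ?_⟩] <;>
      simp only [freeEps, qfreeEps, hm, he, hφ, hp, ha, hq] <;>
      (try split_ifs) <;>
      simp only [← WithTop.coe_zero, ← WithTop.coe_one, ← WithTop.coe_add, ← WithTop.coe_max,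
        WithTop.coe_inj, WithTop.coe_lt_coe, WithTop.top_add, max_top_right] at * <;>
      omega

theorem QC.IsSeminormal.qfreeEps_congr {w w' : List Q} (hwt : freeWt 𝒬 w = freeWt 𝒬 w')
    (hε : freeEps 𝒬 i w = freeEps 𝒬 i w') : qfreeEps 𝒬 i w = qfreeEps 𝒬 i w' := by
  by_cases htop : freeEps 𝒬 i w = ⊤
  · have hw := freeEps_le_qfreeEps (𝒬 := 𝒬) i w
    have hw' := freeEps_le_qfreeEps (𝒬 := 𝒬) i w'
    rw [htop] at hw
    rw [← hε, htop] at hw'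
    rw [top_le_iff.mp hw, top_le_iff.mp hw']
  obtain ⟨a, ha, -, hqa⟩ := h.qfreeEps_eq_ite hli fun x => ne_top_of_mem_of_freeEps_ne_top i htop
  obtain ⟨b, hb, -, hqb⟩ := h.qfreeEps_eq_ite hli fun x =>
    ne_top_of_mem_of_freeEps_ne_top i (hε ▸ htop)
  have hab : a = b := by exact_mod_cast ha.symm.trans (hε.trans hb)
  have hm : mcount 𝒬 i w = mcount 𝒬 i w' :=
    sum_map_eq_of_freeWt_eq hli (fun l => if S.pair l i = -1 then 1 else 0) hwt
  rw [hqa, hqb, hab, hm]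

theorem QC.IsSeminormal.qfreePhi_congr {w w' : List Q} (hwt : freeWt 𝒬 w = freeWt 𝒬 w')
    (hε : freeEps 𝒬 i w = freeEps 𝒬 i w') (hφ : freePhi 𝒬 i w = freePhi 𝒬 i w') :
    qfreePhi 𝒬 i w = qfreePhi 𝒬 i w' := by
  have hq := h.qfreeEps_congr hli hwt hε
  by_cases htop : qfreeEps 𝒬 i w = ⊤
  · rw [h.qfreePhi_eq_top htop, h.qfreePhi_eq_top (hq ▸ htop)]
  · rw [qfreePhi_eq_of_ne_top i htop, qfreePhi_eq_of_ne_top i (hq ▸ htop), hφ]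

end Collapse

/-- If the set of weights of elements of a seminormal quasi-crystal
`Q` is linearly independent, then the plactic congruence is contained in the
hypoplactic congruence; consequently `hypo(Q)` is a monoid quotient of `plac(Q)`. -/
theorem placticRel_le_hypoRel {V : Type*} [NormedAddCommGroup V]
    [InnerProductSpace ℝ V] {ι : Type*} {S : QCSetting V ι} {Q : Type*}
    (𝒬 : QC S Q) (h : 𝒬.IsSeminormal)
    (hli : LinearIndependent ℝ
      ((↑) : (Set.range fun x : Q => ((𝒬.wt x : V))) → V)) :
    ∀ u v : FreeMonoid Q, placticRel 𝒬 u v → hypoRel 𝒬 u v := by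
  rintro u v ⟨ψ, hψ, huv⟩
  have hT := h.freeTensorQC_hasSeminormalDomains
  have hσ := ψ.isIso_toEquiv hψ (hT.compQC u) (hT.compQC v)
  have hσu : ψ.toEquiv hψ ⟨u, .refl u⟩ = ⟨v, .refl v⟩ :=
    Option.some_inj.mp ((ψ.toFun_some hψ _).symm.trans huv)
  have hε i x : qfreeEps 𝒬 i (ψ.toEquiv hψ x).1 = qfreeEps 𝒬 i x.1 :=
    h.qfreeEps_congr hli (hσ.wt_eq x) (hσ.eps_eq i x)
  have hφ i x : qfreePhi 𝒬 i (ψ.toEquiv hψ x).1 = qfreePhi 𝒬 i x.1 :=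
    h.qfreePhi_congr hli (hσ.wt_eq x) (hσ.eps_eq i x) (hσ.phi_eq i x)
  have hQ := h.freeQTensorQC_isTruncationOf
  exact ⟨(hQ.isIso_restrict hσ hε hφ hσu).toQCHom, (Equiv.optionCongr _).bijective,
    congrArg some (hQ.restrict_base hσ hε hσu)⟩
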